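/- arXiv:2105.01621 — 2 statements merged into one kernel-verified Lean document; each statement's English description precedes it below -/
import Mathlib

section
/- Set A = (0,0), D = (1,0). For real parameters m, n, M, N (all positive, with appropriate nondegeneracy), let B be the third vertex of the triangle with base AD where tan(½∠BAD) = m and tan(½∠ADB) = n, and let C be the third vertex of the triangle with base AD where tan(½∠CAD) = M and tan(½∠ADC) = N. Let B* be the isogonal conjugate of B with respect to triangle ACD and C* the isogonal conjugate of C with respect to triangle ABD. Then dist(A, B*) = dist(A, C*). -/
open EuclideanGeometry

noncomputable section

/-- The Euclidean plane. -/
abbrev Pt : Type := EuclideanSpace ℝ (Fin 2)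

/-- `Q` is the isogonal conjugate of `P` with respect to triangle `XYZ`:
at each vertex the lines to `P` and to `Q` are reflections of each other
across the internal angle bisector, expressed by the equality of unsigned
angles on either side. -/
def IsIsogonalConjugate (X Y Z P Q : Pt) : Prop :=
  ∠ Y X P = ∠ Q X Z ∧ ∠ Z X P = ∠ Q X Y ∧
  ∠ X Y P = ∠ Q Y Z ∧ ∠ Z Y P = ∠ Q Y X ∧
  ∠ X Z P = ∠ Q Z Y ∧ ∠ Y Z P = ∠ Q Z X

/-!
Isogonality at `A` and at `D` gives `∠ B* A D = ∠ C A B = ∠ C* A D` and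
`∠ B* D A = ∠ C D B = ∠ C* D A`, so the triangles `A B* D` and `A C* D` share the side `AD`
and both angles on it, and angle–side–angle gives `AB* = AC*`. Since `B` and `C` lie on the same
side of `AD`, neither angle is `π`; both vanish only if `B = C`, and then `A, B, C, D` would be
concyclic.
-/

open Real

namespace EuclideanGeometry

variable {V P : Type*} [NormedAddCommGroup V] [InnerProductSpace ℝ V] [MetricSpace P]
  [NormedAddTorsor V P]

theorem concyclic_of_not_collinear {a b c : P} (h : ¬Collinear ℝ {a, b, c}) :
    Concyclic ({a, b, c} : Set P) := by
  let t : Affine.Triangle ℝ P := ⟨![a, b, c], affineIndependent_iff_not_collinear_set.2 h⟩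
  refine ⟨cospherical_iff_exists_sphere.2 ⟨t.circumsphere, ?_⟩, coplanar_triple ℝ a b c⟩
  simp_rw [Set.insert_subset_iff, Set.singleton_subset_iff]
  exact ⟨t.mem_circumsphere 0, t.mem_circumsphere 1, t.mem_circumsphere 2⟩

theorem eq_of_angle_eq_zero_of_angle_eq_zero {a b c d : P} (h : ¬Collinear ℝ {a, b, d})
    (ha : ∠ c a b = 0) (hd : ∠ c d b = 0) : c = b := by
  by_contra hcb
  have hline {x : P} (hx : ∠ c x b = 0) : x ∈ line[ℝ, c, b] :=
    (collinear_of_angle_eq_zero hx).mem_affineSpan_of_mem_of_ne (by simp) (by simp) (by simp) hcb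
  exact h (collinear_triple_of_mem_affineSpan_pair (hline ha) (right_mem_affineSpan_pair ℝ c b)
    (hline hd))

theorem eq_of_angle_eq_zero_of_angle_ne {a d p : P} (h0 : ∠ p a d = 0) (hd0 : ∠ p d a ≠ 0)
    (hdπ : ∠ p d a ≠ π) : p = d := by
  by_contra hpd
  rcases angle_eq_zero_iff_ne_and_wbtw.1 h0 with ⟨-, hapd⟩ | ⟨hda, hadp⟩
  · exact hd0 (hapd.angle₂₃₁_eq_zero_of_ne hpd)
  · exact hdπ (by rw [angle_comm]; exact Sbtw.angle₁₂₃_eq_pi ⟨hadp, hda, Ne.symm hpd⟩)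

/-- Angle–side–angle, also for the degenerate triangles whose apex is `a` or `d`. -/
theorem dist_eq_of_angle_eq_of_angle_eq {a d p q : P} (had : a ≠ d)
    (hpqa : ∠ p a d = ∠ q a d) (hpqd : ∠ p d a = ∠ q d a) (haπ : ∠ p a d ≠ π)
    (hdπ : ∠ p d a ≠ π) (h0 : ∠ p a d ≠ 0 ∨ ∠ p d a ≠ 0) : dist a p = dist a q := by
  by_cases ha0 : ∠ p a d = 0
  · have hd0 : ∠ p d a ≠ 0 := h0.resolve_left (not_not.2 ha0)
    have hp := eq_of_angle_eq_zero_of_angle_ne ha0 hd0 hdπ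
    have hq := eq_of_angle_eq_zero_of_angle_ne (hpqa ▸ ha0) (hpqd ▸ hd0) (hpqd ▸ hdπ)
    rw [hp, hq]
  by_cases hd0 : ∠ p d a = 0
  · have hp := eq_of_angle_eq_zero_of_angle_ne hd0 ha0 haπ
    have hq := eq_of_angle_eq_zero_of_angle_ne (hpqd ▸ hd0) (hpqa ▸ ha0) (hpqa ▸ haπ)
    rw [hp, hq]
  have hpad : ¬Collinear ℝ {p, a, d} := by
    rw [collinear_iff_eq_or_eq_or_angle_eq_zero_or_angle_eq_pi]
    rintro (rfl | rfl | h | h)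
    · exact hd0 (angle_self_of_ne had)
    · exact had rfl
    · exact ha0 h
    · exact haπ h
  have := (angle_side_angle hpad hpqa rfl (by rw [angle_comm, hpqd, angle_comm])).dist_eq 0 1
  simpa [dist_comm] using this

end EuclideanGeometry

section Coordinates

variable {ι : Type*} [Fintype ι] {i : ι} {a b c d : EuclideanSpace ℝ ι}

theorem angle_ne_pi_of_coord_pos (ha : a i = 0) (hb : 0 < b i) (hc : 0 < c i) :
    ∠ b a c ≠ π := by
  rw [Ne, angle_eq_pi_iff_sbtw]
  rintro ⟨⟨t, ⟨ht0, ht1⟩, rfl⟩, -, -⟩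
  simp only [AffineMap.lineMap_apply_module, PiLp.add_apply, PiLp.smul_apply, smul_eq_mul] at ha
  nlinarith [mul_nonneg ht0 hc.le, mul_nonneg (sub_nonneg.2 ht1) hb.le, mul_pos hb hc]

theorem not_collinear_of_coord_ne_zero (had : a ≠ d) (ha : a i = 0) (hd : d i = 0)
    (hb : b i ≠ 0) : ¬Collinear ℝ {a, b, d} := by
  intro h
  obtain ⟨t, rfl⟩ := mem_affineSpan_pair_iff_exists_lineMap_eq.1 <|
    h.mem_affineSpan_of_mem_of_ne (p₃ := b) (by simp) (by simp) (by simp) had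
  simp [AffineMap.lineMap_apply_module, ha, hd] at hb

end Coordinates

theorem leversha_equidistant_general
    (A D B C Bstar Cstar : Pt)
    (hA : A = !₂[0, 0]) (hD : D = !₂[1, 0])
    (hBy : 0 < B 1) (hCy : 0 < C 1)
    (hnotcyclic : ¬ EuclideanGeometry.Concyclic ({A, B, C, D} : Set Pt))
    (hBs : IsIsogonalConjugate A C D B Bstar)
    (hCs : IsIsogonalConjugate A B D C Cstar) :
    dist A Bstar = dist A Cstar := by
  have hAD : A ≠ D := fun h => by simpa [hA, hD] using congrArg (· 0) h
  have hA1 : A 1 = 0 := by simp [hA]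
  have hD1 : D 1 = 0 := by simp [hD]
  have hABD : ¬Collinear ℝ {A, B, D} := not_collinear_of_coord_ne_zero hAD hA1 hD1 hBy.ne'
  have hBC : C ≠ B := by
    rintro rfl
    exact hnotcyclic (by simpa using concyclic_of_not_collinear hABD)
  have hαB : ∠ Bstar A D = ∠ C A B := hBs.1.symm
  have hαC : ∠ Cstar A D = ∠ C A B := hCs.1.symm.trans (angle_comm B A C)
  have hβB : ∠ Bstar D A = ∠ C D B := hBs.2.2.2.2.2.symm
  have hβC : ∠ Cstar D A = ∠ C D B := hCs.2.2.2.2.2.symm.trans (angle_comm B D C)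
  refine dist_eq_of_angle_eq_of_angle_eq hAD (hαB.trans hαC.symm) (hβB.trans hβC.symm) ?_ ?_ ?_
  · rw [hαB]; exact angle_ne_pi_of_coord_pos hA1 hCy hBy
  · rw [hβB]; exact angle_ne_pi_of_coord_pos hD1 hCy hBy
  · rw [hαB, hβB, ← not_and_or]
    exact fun h => hBC (eq_of_angle_eq_zero_of_angle_eq_zero hABD h.1 h.2)

theorem leversha_equidistant
    (m n M N : ℝ) (hm : 0 < m) (hn : 0 < n) (hM : 0 < M) (hN : 0 < N)
    (hmn : m * n ≠ 1) (hMN : M * N ≠ 1)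
    (A D B C Bstar Cstar : Pt)
    (hA : A = !₂[0, 0]) (hD : D = !₂[1, 0])
    (hBy : 0 < B 1) (hCy : 0 < C 1)
    (hB1 : Real.tan (∠ B A D / 2) = m) (hB2 : Real.tan (∠ A D B / 2) = n)
    (hC1 : Real.tan (∠ C A D / 2) = M) (hC2 : Real.tan (∠ A D C / 2) = N)
    (hnotcyclic : ¬ EuclideanGeometry.Concyclic ({A, B, C, D} : Set Pt))
    (hBs : IsIsogonalConjugate A C D B Bstar)
    (hCs : IsIsogonalConjugate A B D C Cstar) :
    dist A Bstar = dist A Cstar :=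
  leversha_equidistant_general A D B C Bstar Cstar hA hD hBy hCy hnotcyclic hBs hCs
end
end

section
/- Let P be a point not on the sides or circumcircle of triangle XYZ, and let P* be its isogonal conjugate with respect to XYZ. Then the reflections of P across the three side lines of XYZ lie on a circle centered at P* (equivalently, P* is equidistant from the three reflections of P in the sides). -/
open EuclideanGeometry

noncomputable section

/-- The reflection of the point `P` across the line through `X` and `Y`
(for `X ≠ Y`): twice the orthogonal projection of `P` onto the line, minus `P`. -/
def reflLine (X Y P : Pt) : Pt :=
  (2 : ℝ) • (X + ((inner ℝ (P - X) (Y - X)) / (inner ℝ (Y - X) (Y - X))) • (Y - X)) - P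

/-!
Place the triangle in `ℂ` with a vertex `B` at the origin and the two sides through it along `a`
and `b`, so that the reflection of `p` in the side line `ℝ a` is `a * conj p / conj a`.
Isogonality of `p` and `q` at `B` says that `arg p + arg q ≡ arg a + arg b (mod π)`, i.e.
`p * q * conj (a * b)` is real; this is exactly the statement that the reflection of `p` in
line `ℝ b` is the reflection in line `ℝ q` of its reflection in line `ℝ a`. Hence `q`, lying on
the mirror `ℝ q`, is equidistant from the two reflections. Applying this at two vertices gives
the three equal distances.
-/

open Complex ComplexConjugate
open scoped Real

namespace Complex

theorem two_nsmul_coe_arg_eq_zero_iff {z : ℂ} :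
    (2 : ℕ) • (arg z : Real.Angle) = 0 ↔ arg z = 0 ∨ arg z = π := by
  rw [Real.Angle.two_nsmul_eq_zero_iff, arg_coe_angle_eq_iff_eq_toReal,
    arg_coe_angle_eq_iff_eq_toReal, Real.Angle.toReal_zero, Real.Angle.toReal_pi]

theorem im_eq_zero_iff_two_nsmul_coe_arg_eq_zero {z : ℂ} :
    z.im = 0 ↔ (2 : ℕ) • (arg z : Real.Angle) = 0 := by
  rw [two_nsmul_coe_arg_eq_zero_iff, arg_eq_zero_iff, arg_eq_pi_iff]
  constructor
  · intro h
    rcases le_or_gt 0 z.re with h' | h' <;> simp [*]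
  · rintro (h | h) <;> exact h.2

theorem coe_arg_sub_eq_or_of_angle_eq {x y z w : ℂ} (hx : x ≠ 0) (hy : y ≠ 0) (hz : z ≠ 0)
    (hw : w ≠ 0) (h : InnerProductGeometry.angle x y = InnerProductGeometry.angle z w) :
    (arg x - arg y : Real.Angle) = arg z - arg w ∨
      (arg x - arg y : Real.Angle) = arg w - arg z := by
  rw [angle_eq_abs_arg hx hy, angle_eq_abs_arg hz hw] at h
  rw [← arg_div_coe_angle hx hy, ← arg_div_coe_angle hz hw, ← neg_sub,
    ← arg_div_coe_angle hz hw]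
  rcases abs_eq_abs.mp h with h | h <;> simp [h]

theorem two_nsmul_coe_arg_sub_ne_zero {a b : ℂ} (ha : a ≠ 0) (hb : b ≠ 0)
    (h₀ : InnerProductGeometry.angle a b ≠ 0) (hπ : InnerProductGeometry.angle a b ≠ π) :
    (2 : ℕ) • (arg a - arg b : Real.Angle) ≠ 0 := by
  rw [ne_eq, ← arg_div_coe_angle ha hb, two_nsmul_coe_arg_eq_zero_iff]
  rw [angle_eq_abs_arg ha hb] at h₀ hπ
  rintro (h | h) <;> simp_all [abs_of_pos Real.pi_pos]

theorem im_mul_mul_conj_mul_eq_zero_of_angle_eq {a b p q : ℂ} (ha : a ≠ 0) (hb : b ≠ 0)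
    (hab₀ : InnerProductGeometry.angle a b ≠ 0) (habπ : InnerProductGeometry.angle a b ≠ π)
    (h₁ : InnerProductGeometry.angle a p = InnerProductGeometry.angle q b)
    (h₂ : InnerProductGeometry.angle b p = InnerProductGeometry.angle q a) :
    (p * q * conj (a * b)).im = 0 := by
  obtain rfl | hp := eq_or_ne p 0
  · simp
  obtain rfl | hq := eq_or_ne q 0
  · simp
  rw [im_eq_zero_iff_two_nsmul_coe_arg_eq_zero, arg_mul_coe_angle (by simp [*]) (by simp [*]),
    arg_mul_coe_angle hp hq, arg_conj_coe_angle, arg_mul_coe_angle ha hb]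
  rcases coe_arg_sub_eq_or_of_angle_eq ha hp hq hb h₁ with h₁ | h₁
  · linear_combination (norm := abel) (-2 : ℤ) • h₁
  rcases coe_arg_sub_eq_or_of_angle_eq hb hp hq ha h₂ with h₂ | h₂
  · linear_combination (norm := abel) (-2 : ℤ) • h₂
  exact absurd (by linear_combination (norm := abel) h₁ - h₂)
    (two_nsmul_coe_arg_sub_ne_zero ha hb hab₀ habπ)

theorem norm_sub_mul_conj_div_conj_eq {a b p q : ℂ} (ha : a ≠ 0) (hb : b ≠ 0)
    (h : (p * q * conj (a * b)).im = 0) :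
    ‖q - a * conj p / conj a‖ = ‖q - b * conj p / conj b‖ := by
  obtain rfl | hq := eq_or_ne q 0
  · simp [ha, hb]
  have ha' : conj a ≠ 0 := by simpa using ha
  have hb' : conj b ≠ 0 := by simpa using hb
  have hq' : conj q ≠ 0 := by simpa using hq
  have hreflect_q (z : ℂ) : q - q * conj z / conj q = q / conj q * conj (q - z) := by
    field_simp
    simp only [map_sub]
  have hreflect_pair : b * conj p / conj b = q * conj (a * conj p / conj a) / conj q := by
    have hreal := conj_eq_iff_im.mpr h
    simp only [map_mul, map_div₀, conj_conj] at hreal ⊢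
    field_simp
    linear_combination hreal
  rw [hreflect_pair, hreflect_q, norm_mul, norm_div, norm_conj, norm_conj,
    div_self (norm_ne_zero_iff.mpr hq), one_mul]

end Complex

def toComplex : Pt ≃ₗᵢ[ℝ] ℂ := Complex.orthonormalBasisOneI.repr.symm

theorem angle_eq_angle_toComplex (A B C : Pt) :
    ∠ A B C =
      InnerProductGeometry.angle (toComplex A - toComplex B) (toComplex C - toComplex B) := by
  rw [EuclideanGeometry.angle, ← toComplex.toLinearIsometry.angle_map]
  simp

theorem toComplex_reflLine {X Y : Pt} (h : X ≠ Y) (P : Pt) :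
    toComplex (reflLine X Y P) = toComplex X + (toComplex Y - toComplex X) *
      conj (toComplex P - toComplex X) / conj (toComplex Y - toComplex X) := by
  have hd : toComplex Y - toComplex X ≠ 0 := sub_ne_zero.mpr (toComplex.injective.ne h.symm)
  rw [reflLine, real_inner_self_eq_norm_sq, ← toComplex.inner_map_map, ← toComplex.norm_map]
  simp only [toComplex.map_sub, toComplex.map_add, toComplex.map_smul, Complex.inner,
    Complex.real_smul, ofReal_div, ofReal_pow, ofReal_ofNat, ← Complex.mul_conj', re_eq_add_conj]
  generalize toComplex Y - toComplex X = d at *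
  have hd' : conj d ≠ 0 := by simpa using hd
  field_simp
  simp only [map_mul, conj_conj]
  ring

theorem reflLine_comm {X Y : Pt} (h : X ≠ Y) (P : Pt) : reflLine X Y P = reflLine Y X P := by
  apply toComplex.injective
  have hd : conj (toComplex Y - toComplex X) ≠ 0 :=
    (map_ne_zero _).mpr (sub_ne_zero.mpr (toComplex.injective.ne h.symm))
  have hd' : conj (toComplex X - toComplex Y) ≠ 0 :=
    (map_ne_zero _).mpr (sub_ne_zero.mpr (toComplex.injective.ne h))
  rw [toComplex_reflLine h, toComplex_reflLine h.symm]
  field_simp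
  simp only [map_sub]
  ring

theorem dist_reflLine_eq_of_angle_eq {A B C P Q : Pt} (hABC : ¬Collinear ℝ {A, B, C})
    (h₁ : ∠ A B P = ∠ Q B C) (h₂ : ∠ C B P = ∠ Q B A) :
    dist Q (reflLine B A P) = dist Q (reflLine B C P) := by
  have hAB := ne₁₂_of_not_collinear hABC
  have hBC := ne₂₃_of_not_collinear hABC
  have ha : toComplex A - toComplex B ≠ 0 := sub_ne_zero.mpr (toComplex.injective.ne hAB)
  have hc : toComplex C - toComplex B ≠ 0 := sub_ne_zero.mpr (toComplex.injective.ne hBC.symm)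
  have hABC₀ := angle_ne_zero_of_not_collinear hABC
  have hABCπ := angle_ne_pi_of_not_collinear hABC
  simp only [angle_eq_angle_toComplex] at h₁ h₂ hABC₀ hABCπ
  rw [← toComplex.dist_map, ← toComplex.dist_map, dist_eq_norm, dist_eq_norm,
    toComplex_reflLine hAB.symm, toComplex_reflLine hBC, sub_add_eq_sub_sub, sub_add_eq_sub_sub]
  exact norm_sub_mul_conj_div_conj_eq ha hc
    (im_mul_mul_conj_mul_eq_zero_of_angle_eq ha hc hABC₀ hABCπ h₁ h₂)

theorem isogonal_conjugate_equidistant_from_reflections_general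
    (X Y Z P Q : Pt)
    (hXYZ : AffineIndependent ℝ ![X, Y, Z])
    (hQ : IsIsogonalConjugate X Y Z P Q) :
    dist Q (reflLine X Y P) = dist Q (reflLine Y Z P) ∧
    dist Q (reflLine Y Z P) = dist Q (reflLine Z X P) := by
  have hXYZ' : ¬Collinear ℝ {X, Y, Z} := affineIndependent_iff_not_collinear_set.mp hXYZ
  have hYZX' : ¬Collinear ℝ {Y, Z, X} := by
    rwa [Set.pair_comm, Set.insert_comm]
  obtain ⟨-, -, hY₁, hY₂, hZ₁, hZ₂⟩ := hQ
  constructor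
  · rw [reflLine_comm (ne₁₂_of_not_collinear hXYZ')]
    exact dist_reflLine_eq_of_angle_eq hXYZ' hY₁ hY₂
  · rw [reflLine_comm (ne₂₃_of_not_collinear hXYZ')]
    exact dist_reflLine_eq_of_angle_eq hYZX' hZ₂ hZ₁

theorem isogonal_conjugate_equidistant_from_reflections
    (X Y Z P Q : Pt)
    (hXYZ : AffineIndependent ℝ ![X, Y, Z])
    (hP1 : P ∉ affineSpan ℝ ({X, Y} : Set Pt))
    (hP2 : P ∉ affineSpan ℝ ({Y, Z} : Set Pt))
    (hP3 : P ∉ affineSpan ℝ ({Z, X} : Set Pt))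
    (hPcirc : ¬ EuclideanGeometry.Concyclic ({X, Y, Z, P} : Set Pt))
    (hQ : IsIsogonalConjugate X Y Z P Q) :
    dist Q (reflLine X Y P) = dist Q (reflLine Y Z P) ∧
    dist Q (reflLine Y Z P) = dist Q (reflLine Z X P) :=
  isogonal_conjugate_equidistant_from_reflections_general X Y Z P Q hXYZ hQ
end
end
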